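/- arXiv:2104.10251 — 3 statements merged into one kernel-verified Lean document; each statement's English description precedes it below -/
import Mathlib

section
/- Let q be a prime power and n ≥ 1. For any nontrivial multiplicative character χ of F_{q^n} (extended by χ(0)=0) and any F_q-affine subspace A ⊆ F_{q^n} of dimension t ≥ 0, we have |∑_{x ∈ A} χ(x)| ≤ q^{min(t, n/2)}. -/
open scoped Classical BigOperators

noncomputable section

/-- `A ⊆ F` is an `K`-affine subspace of dimension `t`: a coset `u + V` of a
`t`-dimensional `K`-linear subspace `V`. -/
def IsAffineSubspaceOfDim (K : Type*) {F : Type*} [Field K] [Field F] [Algebra K F]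
    (t : ℕ) (A : Set F) : Prop :=
  ∃ (u : F) (V : Submodule K F), Module.finrank K ↥V = t ∧ A = {x | x - u ∈ V}

/-- A family of `n` affine hyperplanes in general position: any `k ≥ 1` of them
intersect in an affine space of dimension `n - k`. -/
def InGeneralPosition (K : Type*) {F : Type*} [Field K] [Field F] [Algebra K F]
    (n : ℕ) (A : Fin n → Set F) : Prop :=
  ∀ s : Finset (Fin n), s.Nonempty →
    IsAffineSubspaceOfDim K (n - s.card) (⋂ i ∈ s, A i)

/-- `x` is a primitive element of the finite field `F`, i.e. a generator of `Fˣ`. -/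
def IsPrimitive {F : Type*} [Field F] [Fintype F] (x : F) : Prop :=
  orderOf x = Fintype.card F - 1

/-- `W t`: the number of squarefree divisors of `t`. -/
def sqfDivisors (t : ℕ) : ℕ := (t.divisors.filter Squarefree).card

/-- `δ(q, n) = ∑_{i=0}^{n-1} C(n,i) q^{min(i, n/2)}`. -/
def deltaQN (q n : ℕ) : ℝ :=
  ∑ i ∈ Finset.range n, (n.choose i : ℝ) * (q : ℝ) ^ (min (i : ℝ) ((n : ℝ) / 2))

/-!
For `t ≤ n/2` the trivial bound `#A = q^t` suffices. Otherwise fix a primitive additive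
character `ψ` of `F`. Fourier expansion of the indicator of `A = u + V` gives
`q^n ∑_{x ∈ A} χ x = ∑_b c(b) G(χ, ψ(-b ·))` with `c(b) = ∑_{a ∈ A} ψ(b a)`. Each twisted
Gauss sum has modulus at most `q^{n/2}`, and `|c(b)| = ∑_{v ∈ V} ψ(b v)`, which is `#V` or `0`;
by orthogonality these add up to `q^n`, so `∑_b |c(b)| = q^n`.
-/

lemma MulChar.norm_apply_le_one {R α : Type*} [CommMonoid R] [Finite Rˣ] [NormedCommRing α]
    [NormMulClass α] [NormOneClass α] (χ : MulChar R α) (x : R) : ‖χ x‖ ≤ 1 := by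
  by_cases hx : IsUnit x
  · obtain ⟨u, rfl⟩ := hx
    exact ((χ.toMonoidHom.comp (Units.coeHom R)).isOfFinOrder
      (isOfFinOrder_of_finite u)).norm_eq_one.le
  · simp [χ.map_nonunit hx]

section GaussSum

variable {F : Type*} [Field F] [Fintype F] {χ : MulChar F ℂ} {ψ : AddChar F ℂ}

lemma norm_gaussSum_eq_sqrt_card (hχ : χ ≠ 1) (hψ : ψ.IsPrimitive) :
    ‖gaussSum χ ψ‖ = √(Fintype.card F) := by
  have h := gaussSum_mul_gaussSum_eq_card hχ hψ
  rw [← star_gaussSum_eq, RCLike.star_def, Complex.mul_conj'] at h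
  rw [← Real.sqrt_sq (norm_nonneg _)]
  exact congrArg _ (by exact_mod_cast h)

lemma norm_gaussSum_mulShift_le_sqrt_card (hχ : χ ≠ 1) (hψ : ψ.IsPrimitive) (b : F) :
    ‖gaussSum χ (ψ.mulShift b)‖ ≤ √(Fintype.card F) := by
  rcases eq_or_ne b 0 with rfl | hb
  · simp [AddChar.mulShift_zero, gaussSum_one_right hχ]
  · have h := gaussSum_mulShift_eq χ ψ (Units.mk0 b hb)
    rw [Units.val_mk0] at h
    rw [h, norm_mul, norm_gaussSum_eq_sqrt_card hχ hψ]
    exact mul_le_of_le_one_left (Real.sqrt_nonneg _) (χ⁻¹.norm_apply_le_one _)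

end GaussSum

namespace AddChar

variable {R R' : Type*} [CommRing R] [Fintype R] [CommRing R'] [IsDomain R'] {ψ : AddChar R R'}

lemma card_mul_sum_eq_sum_mulShift_mul_sum (hψ : ψ.IsPrimitive) (S : Finset R) (f : R → R') :
    (Fintype.card R : R') * ∑ a ∈ S, f a
      = ∑ b, (∑ a ∈ S, ψ (b * a)) * ∑ x, f x * ψ (-b * x) := by
  have orthogonality : ∀ a x : R, ∑ b, ψ (b * a) * ψ (-b * x)
      = if a = x then (Fintype.card R : R') else 0 := fun a x => by
    calc ∑ b, ψ (b * a) * ψ (-b * x) = ∑ b, ψ (b * (a - x)) :=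
          Finset.sum_congr rfl fun b _ => by rw [← map_add_eq_mul]; ring_nf
      _ = _ := by rw [sum_mulShift _ hψ]; simp only [sub_eq_zero, Nat.cast_ite, Nat.cast_zero]
  calc (Fintype.card R : R') * ∑ a ∈ S, f a
      = ∑ a ∈ S, ∑ x, f x * ∑ b, ψ (b * a) * ψ (-b * x) := by
        simp_rw [orthogonality, mul_ite, mul_zero, Finset.sum_ite_eq, if_pos (Finset.mem_univ _),
          Finset.mul_sum, mul_comm]
    _ = ∑ a ∈ S, ∑ b, ∑ x, ψ (b * a) * (f x * ψ (-b * x)) := by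
        refine Finset.sum_congr rfl fun a _ => ?_
        rw [Finset.sum_comm]
        simp_rw [Finset.mul_sum]
        exact Finset.sum_congr rfl fun b _ => Finset.sum_congr rfl fun x _ => by ring
    _ = ∑ b, (∑ a ∈ S, ψ (b * a)) * ∑ x, f x * ψ (-b * x) := by
        rw [Finset.sum_comm]
        simp_rw [Finset.sum_mul, Finset.mul_sum]

lemma sum_norm_sum_coset_eq_card {ψ : AddChar R ℂ} (hψ : ψ.IsPrimitive)
    (V : AddSubgroup R) (u : R) :
    ∑ b, ‖∑ v : V, ψ (b * (u + v))‖ = Fintype.card R := by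
  have translate : ∀ b, ‖∑ v : V, ψ (b * (u + v))‖ = ‖∑ v : V, ψ (b * v)‖ := fun b => by
    simp only [mul_add, map_add_eq_mul, ← Finset.mul_sum, norm_mul, norm_apply, one_mul]
  have natCast : ∀ b, ∃ m : ℕ, ∑ v : V, ψ (b * v) = m := fun b => by
    change ∃ m : ℕ, ∑ v, (ψ.mulShift b).compAddMonoidHom V.subtype v = m
    rw [sum_eq_ite]
    split_ifs
    exacts [⟨_, rfl⟩, ⟨0, Nat.cast_zero.symm⟩]
  have total : ∑ b, ∑ v : V, ψ (b * v) = Fintype.card R := by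
    rw [Finset.sum_comm]
    simp [sum_mulShift _ hψ]
  have norm_eq : ∀ b, (‖∑ v : V, ψ (b * v)‖ : ℂ) = ∑ v : V, ψ (b * v) := fun b => by
    obtain ⟨m, hm⟩ := natCast b
    rw [hm, Complex.norm_natCast, Complex.ofReal_natCast]
  apply Complex.ofReal_injective
  push_cast
  simp_rw [translate, norm_eq, total]

end AddChar

lemma AddSubgroup.sum_filter_sub_mem {G M : Type*} [AddCommGroup G] [Fintype G] [AddCommMonoid M]
    (V : AddSubgroup G) (u : G) (g : G → M) :
    ∑ x ∈ Finset.univ.filter (fun x => x - u ∈ V), g x = ∑ v : V, g (u + v) := by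
  rw [Finset.sum_subtype _ (p := fun x => x - u ∈ V) (fun x => by simp) g]
  exact Fintype.sum_equiv ((Equiv.subRight u).subtypeEquiv fun _ => Iff.rfl) _ _
    fun x => by simp

section CharSumOverCoset

variable {F : Type*} [Field F] [Fintype F] {χ : MulChar F ℂ}

lemma MulChar.norm_sum_le_card (χ : MulChar F ℂ) (S : Finset F) : ‖∑ x ∈ S, χ x‖ ≤ S.card :=
  (norm_sum_le _ _).trans <| by simpa using Finset.sum_le_sum fun x _ => χ.norm_apply_le_one x

lemma MulChar.norm_sum_coset_le_sqrt_card (hχ : χ ≠ 1) (V : AddSubgroup F) (u : F) :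
    ‖∑ x ∈ Finset.univ.filter (fun x => x - u ∈ V), χ x‖ ≤ √(Fintype.card F) := by
  set ψ := AddChar.FiniteField.primitiveChar_to_Complex F
  have hψ : ψ.IsPrimitive := AddChar.FiniteField.primitiveChar_to_Complex_isPrimitive F
  set N : ℝ := (Fintype.card F : ℝ)
  have hN : 0 < N := by positivity
  have fourier := AddChar.card_mul_sum_eq_sum_mulShift_mul_sum hψ
    (Finset.univ.filter (fun x => x - u ∈ V)) χ
  refine le_of_mul_le_mul_left ?_ hN
  calc N * ‖∑ x ∈ Finset.univ.filter (fun x => x - u ∈ V), χ x‖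
      = ‖(Fintype.card F : ℂ) * ∑ x ∈ Finset.univ.filter (fun x => x - u ∈ V), χ x‖ := by
        rw [norm_mul, Complex.norm_natCast]
    _ = ‖∑ b, (∑ v : V, ψ (b * (u + v))) * gaussSum χ (ψ.mulShift (-b))‖ := by
        simp_rw [fourier, AddSubgroup.sum_filter_sub_mem]; rfl
    _ ≤ ∑ b, ‖∑ v : V, ψ (b * (u + v))‖ * √N := by
        refine (norm_sum_le _ _).trans <| Finset.sum_le_sum fun b _ => ?_
        rw [norm_mul]
        gcongr
        exact norm_gaussSum_mulShift_le_sqrt_card hχ hψ _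
    _ = N * √N := by rw [← Finset.sum_mul, AddChar.sum_norm_sum_coset_eq_card hψ]

end CharSumOverCoset

theorem charSum_affine_bound_general (q n t : ℕ)
    (K F : Type) [Field K] [Field F] [Algebra K F] [Fintype K] [Fintype F]
    (hK : Fintype.card K = q) (hd : Module.finrank K F = n)
    (χ : MulChar F ℂ) (hχ : χ ≠ 1)
    (A : Set F) (hA : IsAffineSubspaceOfDim K t A) :
    ‖∑ x ∈ Finset.univ.filter (· ∈ A), χ x‖
      ≤ (q : ℝ) ^ (min (t : ℝ) ((n : ℝ) / 2)) := by
  obtain ⟨u, V, rfl, rfl⟩ := hA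
  change ‖∑ x ∈ Finset.univ.filter (fun x => x - u ∈ V.toAddSubgroup), χ x‖ ≤ _
  rcases le_total (Module.finrank K V : ℝ) (n / 2) with h | h
  · have card_coset : (Finset.univ.filter (fun x => x - u ∈ V.toAddSubgroup)).card
        = q ^ Module.finrank K V := by
      rw [← hK, ← Module.card_eq_pow_finrank, Finset.card_eq_sum_ones,
        AddSubgroup.sum_filter_sub_mem, Finset.sum_const, smul_eq_mul, mul_one]
      rfl
    rw [min_eq_left h, Real.rpow_natCast]
    exact_mod_cast (χ.norm_sum_le_card _).trans_eq (congrArg _ card_coset)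
  · have sqrt_card : (q : ℝ) ^ ((n : ℝ) / 2) = √(Fintype.card F) := by
      rw [Module.card_eq_pow_finrank (K := K), hK, hd, Nat.cast_pow, Real.sqrt_eq_rpow,
        ← Real.rpow_natCast, ← Real.rpow_mul (Nat.cast_nonneg q)]
      ring_nf
    rw [min_eq_right h, sqrt_card]
    exact χ.norm_sum_coset_le_sqrt_card hχ V.toAddSubgroup u

theorem charSum_affine_bound (q n t : ℕ) (hq : IsPrimePow q) (hn : 1 ≤ n)
    (K F : Type) [Field K] [Field F] [Algebra K F] [Fintype K] [Fintype F]
    (hK : Fintype.card K = q) (hd : Module.finrank K F = n)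
    (χ : MulChar F ℂ) (hχ : χ ≠ 1)
    (A : Set F) (hA : IsAffineSubspaceOfDim K t A) :
    ‖∑ x ∈ Finset.univ.filter (· ∈ A), χ x‖
      ≤ (q : ℝ) ^ (min (t : ℝ) ((n : ℝ) / 2)) :=
  charSum_affine_bound_general q n t K F hK hd χ hχ A hA
end
end

section
/- For any sets X, Y ⊆ F_{q^n} and any nontrivial multiplicative character χ of F_{q^n}, |∑_{x ∈ X} ∑_{y ∈ Y} χ(x+y)| ≤ (#X · #Y · q^n)^{1/2}. -/
open scoped Classical BigOperators

noncomputable section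

set_option linter.unusedSectionVars false

section Aux

variable {F : Type} [Field F] [Fintype F]

lemma chizero (χ : MulChar F ℂ) : χ 0 = 0 := MulChar.map_nonunit χ not_isUnit_zero

lemma sumA (χ : MulChar F ℂ) (hχ : χ ≠ 1) (c : F) (hc : c ≠ 0) :
    ∑ x : F, χ x * (starRingEnd ℂ) (χ (x + c)) = -1 := by
  have h1 : ∀ x : F, χ x * (starRingEnd ℂ) (χ (x + c)) = χ (x * (x + c)⁻¹) := by
    intro x
    rw [map_mul, ← MulChar.inv_apply', ← MulChar.star_apply', RCLike.star_def]
  simp_rw [h1]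
  have h2 : ∑ x : F, χ (x * (x + c)⁻¹)
      = ∑ x ∈ Finset.univ.filter (fun x : F => x ≠ 0 ∧ x + c ≠ 0), χ (x * (x + c)⁻¹) := by
    refine (Finset.sum_filter_of_ne ?_).symm
    intro x _ hx
    constructor
    · rintro rfl; exact hx (by simp [chizero])
    · intro h0; rw [h0] at hx; simp [chizero] at hx
  rw [h2]
  have h3 : ∑ x ∈ Finset.univ.filter (fun x : F => x ≠ 0 ∧ x + c ≠ 0), χ (x * (x + c)⁻¹)
      = ∑ w ∈ Finset.univ.filter (fun w : F => w ≠ 0 ∧ w ≠ 1), χ w := by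
    refine Finset.sum_nbij' (fun x => x * (x + c)⁻¹) (fun w => w * c * (1 - w)⁻¹) ?_ ?_ ?_ ?_ ?_
    · intro a ha
      simp only [Finset.mem_filter, Finset.mem_univ, true_and] at ha ⊢
      obtain ⟨ha0, hac⟩ := ha
      refine ⟨mul_ne_zero ha0 (inv_ne_zero hac), ?_⟩
      intro h1
      rw [mul_inv_eq_one₀ hac] at h1
      exact hc (by linear_combination -h1)
    · intro w hw
      simp only [Finset.mem_filter, Finset.mem_univ, true_and] at hw ⊢
      obtain ⟨hw0, hw1⟩ := hw
      have h1w : (1 : F) - w ≠ 0 := sub_ne_zero.mpr (Ne.symm hw1)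
      constructor
      · exact mul_ne_zero (mul_ne_zero hw0 hc) (inv_ne_zero h1w)
      · intro h
        have h5 : w * c * (1 - w)⁻¹ = -c := eq_neg_of_add_eq_zero_left h
        apply hc
        field_simp at h5
        linear_combination c * h5
    · intro a ha
      simp only [Finset.mem_filter, Finset.mem_univ, true_and] at ha
      obtain ⟨ha0, hac⟩ := ha
      field_simp
      rw [show a + c - a = c by ring, div_self hc]
    · intro w hw
      simp only [Finset.mem_filter, Finset.mem_univ, true_and] at hw
      obtain ⟨hw0, hw1⟩ := hw
      have h1w : (1 : F) - w ≠ 0 := sub_ne_zero.mpr (Ne.symm hw1)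
      show w * c * (1 - w)⁻¹ * (w * c * (1 - w)⁻¹ + c)⁻¹ = w
      have hgc : w * c * (1 - w)⁻¹ + c = c * (1 - w)⁻¹ := by field_simp; ring
      rw [hgc]
      field_simp
    · intro a _; rfl
  rw [h3]
  have h4 : Finset.univ.filter (fun w : F => w ≠ 0 ∧ w ≠ 1)
      = (Finset.univ : Finset F) \ {0, 1} := by
    ext w; simp [not_or, and_comm]
  rw [h4, Finset.sum_sdiff_eq_sub (Finset.subset_univ _),
    Finset.sum_pair (zero_ne_one), MulChar.sum_eq_zero_of_ne_one hχ]
  simp [chizero]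

lemma sumB (χ : MulChar F ℂ) :
    ∑ x : F, χ x * (starRingEnd ℂ) (χ x) = (Fintype.card F : ℂ) - 1 := by
  have h1 : ∀ x : F, χ x * (starRingEnd ℂ) (χ x) = if x = 0 then 0 else 1 := by
    intro x
    split_ifs with h
    · simp [h, chizero]
    · have hs : (starRingEnd ℂ) (χ x) = χ x⁻¹ := by
        rw [← MulChar.inv_apply', ← MulChar.star_apply', RCLike.star_def]
      rw [hs, ← map_mul, mul_inv_cancel₀ h, map_one]
  simp_rw [h1]
  rw [Finset.sum_ite, Finset.sum_const, Finset.sum_const]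
  have h2 : (Finset.filter (fun x : F => ¬x = 0) Finset.univ) = Finset.univ.erase 0 := by
    ext x; simp [Finset.mem_erase]
  rw [h2, Finset.card_erase_of_mem (Finset.mem_univ (0 : F)), Finset.card_univ]
  have hpos : 1 ≤ Fintype.card F := Fintype.card_pos
  rw [smul_zero, zero_add, nsmul_eq_mul, mul_one, Nat.cast_sub hpos, Nat.cast_one]

end Aux

section Aux2

variable {F : Type} [Field F] [Fintype F]

lemma sum_absSq_le (χ : MulChar F ℂ) (hχ : χ ≠ 1) (Y : Finset F) :
    ∑ x : F, ‖∑ y ∈ Y, χ (x + y)‖^2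
      ≤ (Y.card : ℝ) * (Fintype.card F : ℝ) := by
  set S : F → ℂ := fun x => ∑ y ∈ Y, χ (x + y) with hS
  have key : ∑ x : F, S x * (starRingEnd ℂ) (S x)
      = (Y.card : ℂ) * (Fintype.card F : ℂ) - (Y.card : ℂ)^2 := by
    have expand : ∀ x : F, S x * (starRingEnd ℂ) (S x)
        = ∑ y ∈ Y, ∑ y' ∈ Y, χ (x + y) * (starRingEnd ℂ) (χ (x + y')) := by
      intro x
      rw [hS, map_sum, Finset.sum_mul_sum]
    calc ∑ x : F, S x * (starRingEnd ℂ) (S x)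
        = ∑ x : F, ∑ y ∈ Y, ∑ y' ∈ Y, χ (x + y) * (starRingEnd ℂ) (χ (x + y')) := by
          simp_rw [expand]
      _ = ∑ y ∈ Y, ∑ y' ∈ Y, ∑ x : F, χ (x + y) * (starRingEnd ℂ) (χ (x + y')) := by
          rw [Finset.sum_comm]
          exact Finset.sum_congr rfl fun y _ => Finset.sum_comm
      _ = ∑ y ∈ Y, ∑ y' ∈ Y, ((if y' = y then ((Fintype.card F : ℂ)) else 0) - 1) := by
          refine Finset.sum_congr rfl fun y _ => Finset.sum_congr rfl fun y' _ => ?_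
          have shift : ∑ x : F, χ (x + y) * (starRingEnd ℂ) (χ (x + y'))
              = ∑ z : F, χ z * (starRingEnd ℂ) (χ (z + (y' - y))) := by
            refine Fintype.sum_equiv (Equiv.addRight y) _ _ ?_
            intro x
            simp only [Equiv.coe_addRight]
            congr 2
            ring
          rw [shift]
          by_cases hy : y' = y
          · subst hy
            simp only [sub_self, add_zero] at shift ⊢
            rw [sumB χ]
            simp
          · rw [if_neg hy, sumA χ hχ _ (sub_ne_zero.mpr hy), zero_sub]
      _ = (Y.card : ℂ) * (Fintype.card F : ℂ) - (Y.card : ℂ)^2 := by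
          have inner : ∀ y ∈ Y, ∑ y' ∈ Y, ((if y' = y then ((Fintype.card F : ℂ)) else 0) - 1)
              = (Fintype.card F : ℂ) - (Y.card : ℂ) := by
            intro y hy
            rw [Finset.sum_sub_distrib, Finset.sum_ite_eq' Y y (fun _ => (Fintype.card F : ℂ)),
              if_pos hy, Finset.sum_const, nsmul_eq_mul, mul_one]
          rw [Finset.sum_congr rfl inner, Finset.sum_const, nsmul_eq_mul]
          ring
  have hcast : ((∑ x : F, ‖S x‖^2 : ℝ) : ℂ)
      = ∑ x : F, S x * (starRingEnd ℂ) (S x) := by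
    push_cast
    refine Finset.sum_congr rfl fun x _ => ?_
    rw [Complex.mul_conj, ← Complex.sq_norm]
    push_cast
    ring
  rw [key] at hcast
  have hreal : ∑ x : F, ‖S x‖^2
      = (Y.card : ℝ) * (Fintype.card F : ℝ) - (Y.card : ℝ)^2 := by
    exact_mod_cast hcast
  rw [hreal]
  nlinarith [sq_nonneg ((Y.card : ℝ))]

end Aux2

theorem charSum_sumset_bound (q n : ℕ) (hq : IsPrimePow q) (hn : 1 ≤ n)
    (K F : Type) [Field K] [Field F] [Algebra K F] [Fintype K] [Fintype F]
    (hK : Fintype.card K = q) (hd : Module.finrank K F = n)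
    (χ : MulChar F ℂ) (hχ : χ ≠ 1) (X Y : Finset F) :
    ‖∑ x ∈ X, ∑ y ∈ Y, χ (x + y)‖
      ≤ Real.sqrt ((X.card : ℝ) * (Y.card : ℝ) * (q : ℝ) ^ n) := by
  have hcard : (Fintype.card F : ℝ) = (q : ℝ) ^ n := by
    rw [Module.card_eq_pow_finrank (K := K) (V := F), hK, hd]
    push_cast
    ring
  set S : F → ℂ := fun x => ∑ y ∈ Y, χ (x + y) with hS
  have h1 : ‖∑ x ∈ X, S x‖ ≤ ∑ x ∈ X, ‖S x‖ :=
    norm_sum_le _ _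
  have h2 : (∑ x ∈ X, ‖S x‖)^2
      ≤ (X.card : ℝ) * ∑ x ∈ X, ‖S x‖^2 := by
    exact_mod_cast sq_sum_le_card_mul_sum_sq (s := X) (f := fun x => ‖S x‖)
  have h3 : ∑ x ∈ X, ‖S x‖^2 ≤ ∑ x : F, ‖S x‖^2 :=
    Finset.sum_le_sum_of_subset_of_nonneg (Finset.subset_univ _)
      (fun _ _ _ => sq_nonneg _)
  have h4 := sum_absSq_le χ hχ Y
  have h5 : ‖∑ x ∈ X, S x‖^2
      ≤ (X.card : ℝ) * (Y.card : ℝ) * (q : ℝ) ^ n := by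
    calc ‖∑ x ∈ X, S x‖^2
        ≤ (∑ x ∈ X, ‖S x‖)^2 := by
          apply pow_le_pow_left₀ (norm_nonneg _) h1
      _ ≤ (X.card : ℝ) * ∑ x ∈ X, ‖S x‖^2 := h2
      _ ≤ (X.card : ℝ) * ((Y.card : ℝ) * (Fintype.card F : ℝ)) := by
          apply mul_le_mul_of_nonneg_left (le_trans h3 h4) (Nat.cast_nonneg _)
      _ = (X.card : ℝ) * (Y.card : ℝ) * (q : ℝ) ^ n := by
          rw [hcard]; ring
  calc ‖∑ x ∈ X, S x‖
      = Real.sqrt (‖∑ x ∈ X, S x‖^2) :=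
        (Real.sqrt_sq (norm_nonneg _)).symm
    _ ≤ Real.sqrt ((X.card : ℝ) * (Y.card : ℝ) * (q : ℝ) ^ n) :=
        Real.sqrt_le_sqrt h5
end
end

section
/- For every integer t ≥ 3, the number W(t) of squarefree divisors of t satisfies W(t) < 4.9 · t^{1/4}. -/
open scoped Classical BigOperators

noncomputable section

lemma aux_card (t : ℕ) (h0 : t ≠ 0) :
    (t.divisors.filter Squarefree).card = 2 ^ t.primeFactors.card := by
  have h := Nat.divisors_filter_squarefree h0
  have : (t.divisors.filter Squarefree).card =
      (UniqueFactorizationMonoid.normalizedFactors t).toFinset.powerset.card := by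
    rw [Finset.card, h, Multiset.card_map, Finset.card]
  rw [this, Finset.card_powerset, Nat.factors_eq]
  rfl

lemma aux_prime_ge (p : ℕ) (hp : p.Prime) (hnot : p ∉ ({2,3,5,7,11,13} : Finset ℕ)) :
    16 ≤ p := by
  by_contra h
  push_neg at h
  interval_cases p <;> simp_all <;> norm_num at hp

lemma aux_nat (S : Finset ℕ) (hS : ∀ p ∈ S, p.Prime) :
    16 ^ S.card * 30030 ≤ 16777216 * ∏ p ∈ S, p := by
  classical
  set T : Finset ℕ := {2,3,5,7,11,13} with hT
  have hsplit : S = (S ∩ T) ∪ (S \ T) := by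
    ext p; simp only [Finset.mem_union, Finset.mem_inter, Finset.mem_sdiff]; tauto
  have hdisj : Disjoint (S ∩ T) (S \ T) := Finset.disjoint_of_subset_left
    (Finset.inter_subset_right) Finset.sdiff_disjoint.symm
  have hcard : S.card = (S ∩ T).card + (S \ T).card := by
    conv_lhs => rw [hsplit]
    exact Finset.card_union_of_disjoint hdisj
  have hprod : ∏ p ∈ S, p = (∏ p ∈ S ∩ T, p) * ∏ p ∈ S \ T, p := by
    conv_lhs => rw [hsplit]
    exact Finset.prod_union hdisj
  -- big primes
  have hB : 16 ^ (S \ T).card ≤ ∏ p ∈ S \ T, p := by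
    apply Finset.pow_card_le_prod
    intro p hp
    exact aux_prime_ge p (hS p (Finset.mem_sdiff.mp hp).1) (Finset.mem_sdiff.mp hp).2
  -- small primes
  have hA : 16 ^ (S ∩ T).card * 30030 ≤ 16777216 * ∏ p ∈ S ∩ T, p := by
    have hsub : S ∩ T ⊆ T := Finset.inter_subset_right
    have h30030 : (30030 : ℕ) = (∏ p ∈ S ∩ T, p) * ∏ p ∈ T \ (S ∩ T), p := by
      rw [← Finset.prod_union (Finset.disjoint_sdiff), Finset.union_sdiff_of_subset hsub]
      decide
    have hle : ∏ p ∈ T \ (S ∩ T), p ≤ 16 ^ (T \ (S ∩ T)).card := by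
      apply Finset.prod_le_pow_card
      intro p hp
      have : p ∈ T := (Finset.mem_sdiff.mp hp).1
      fin_cases this <;> norm_num
    have hcards : (S ∩ T).card + (T \ (S ∩ T)).card = 6 := by
      have h6 := Finset.card_sdiff_add_card_eq_card hsub
      have hTc : T.card = 6 := by decide
      omega
    calc 16 ^ (S ∩ T).card * 30030
        = (∏ p ∈ S ∩ T, p) * (16 ^ (S ∩ T).card * ∏ p ∈ T \ (S ∩ T), p) := by
          rw [h30030]; ring
      _ ≤ (∏ p ∈ S ∩ T, p) * (16 ^ (S ∩ T).card * 16 ^ (T \ (S ∩ T)).card) :=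
          Nat.mul_le_mul_left _ (Nat.mul_le_mul_left _ hle)
      _ = (∏ p ∈ S ∩ T, p) * 16 ^ ((S ∩ T).card + (T \ (S ∩ T)).card) := by
          rw [pow_add]
      _ = 16777216 * ∏ p ∈ S ∩ T, p := by rw [hcards]; ring
  calc 16 ^ S.card * 30030 = (16 ^ (S ∩ T).card * 30030) * 16 ^ (S \ T).card := by
        rw [hcard, pow_add]; ring
    _ ≤ (16777216 * ∏ p ∈ S ∩ T, p) * ∏ p ∈ S \ T, p :=
        Nat.mul_le_mul hA hB
    _ = 16777216 * ∏ p ∈ S, p := by rw [hprod]; ring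

theorem sqfDivisors_lt_one_quarter (t : ℕ) (ht : 3 ≤ t) :
    (sqfDivisors t : ℝ) < 4.9 * (t : ℝ) ^ ((1 : ℝ) / 4) := by
  have h0 : t ≠ 0 := by omega
  have hW : sqfDivisors t = 2 ^ t.primeFactors.card := aux_card t h0
  have hnat : (sqfDivisors t) ^ 4 * 30030 ≤ 16777216 * t := by
    have h1 := aux_nat t.primeFactors (fun p hp => Nat.prime_of_mem_primeFactors hp)
    have h2 : ∏ p ∈ t.primeFactors, p ≤ t :=
      Nat.le_of_dvd (by omega) (Nat.prod_primeFactors_dvd t)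
    have h3 : (sqfDivisors t) ^ 4 = 16 ^ t.primeFactors.card := by
      rw [hW, ← pow_mul, mul_comm, pow_mul]; norm_num
    rw [h3]
    exact le_trans h1 (Nat.mul_le_mul_left _ h2)
  have ht0 : (0:ℝ) < (t:ℝ) := by positivity
  set x := (t:ℝ) ^ ((1:ℝ)/4) with hxdef
  have hx0 : 0 < x := Real.rpow_pos_of_pos ht0 _
  have hx4 : x ^ 4 = (t:ℝ) := by
    rw [hxdef, ← Real.rpow_natCast ((t:ℝ) ^ ((1:ℝ)/4)) 4, ← Real.rpow_mul ht0.le]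
    norm_num
  apply lt_of_pow_lt_pow_left₀ 4 (by positivity)
  have hcast : ((sqfDivisors t : ℝ)) ^ 4 * 30030 ≤ 16777216 * (t:ℝ) := by
    exact_mod_cast hnat
  have hb4 : (4.9 * x) ^ 4 = 576.4801 * (t:ℝ) := by
    rw [mul_pow, hx4]; norm_num
  rw [hb4]
  nlinarith [hcast, ht0]
end
end
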